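/- arXiv:1401.5375 — 2 statements merged into one kernel-verified Lean document; each statement's English description precedes it below -/
import Mathlib

section
/- Let A be an n×n real symmetric positive semidefinite matrix and Γ an n×n real symmetric positive definite matrix. Then for every v ∈ ℝⁿ, ‖Γ^{-1/2} v‖ ≤ ‖(A+Γ)^{1/2} Γ^{-1/2}‖² · ‖Γ^{1/2} (A+Γ)^{-1} v‖. In particular, if ρ < 1/‖(A+Γ)^{1/2} Γ^{-1/2}‖², then ρ ‖Γ^{-1/2} v‖ ≤ ‖Γ^{1/2} (A+Γ)^{-1} v‖ for every v ∈ ℝⁿ. -/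
/-!
Write `S = Γ^{1/2}`, `T = (A+Γ)^{1/2}` and `P = T S⁻¹`. Since `S` and `T` are symmetric and
`T² = A + Γ`, one has `S⁻¹ = Pᵀ P · S (A+Γ)⁻¹`, so
`‖S⁻¹ v‖ ≤ ‖Pᵀ P‖ ‖S (A+Γ)⁻¹ v‖ = ‖P‖² ‖S (A+Γ)⁻¹ v‖` by the C⋆-identity for the spectral norm.
The second claim follows by multiplying through by `ρ`, as `ρ ‖P‖² < 1`.
-/

open Matrix

/-- The positive semidefinite square root of a positive semidefinite matrix
(the definition Mathlib had under this name; it has since been removed). -/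
noncomputable def Matrix.PosSemidef.sqrt {n : Type*} [Fintype n] [DecidableEq n] {𝕜 : Type*}
    [RCLike 𝕜] [PartialOrder 𝕜] {A : Matrix n n 𝕜} (hA : A.PosSemidef) : Matrix n n 𝕜 :=
  hA.1.eigenvectorUnitary.1 * diagonal ((↑) ∘ (√·) ∘ hA.1.eigenvalues) *
  (star hA.1.eigenvectorUnitary : Matrix n n 𝕜)

/-- The Euclidean norm of a vector in `ℝⁿ`. -/
noncomputable def euclNorm {k : ℕ} (v : Fin k → ℝ) : ℝ :=
  ‖(WithLp.equiv 2 (Fin k → ℝ)).symm v‖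

/-- The operator (spectral) norm of a matrix, induced by the Euclidean norms. -/
noncomputable def l2OpNorm {k l : ℕ} (A : Matrix (Fin k) (Fin l) ℝ) : ℝ :=
  ‖LinearMap.toContinuousLinearMap (Matrix.toEuclideanLin A)‖

namespace Matrix

section Sqrt

open scoped ComplexOrder

variable {n 𝕜 : Type*} [Fintype n] [DecidableEq n] [RCLike 𝕜] {A : Matrix n n 𝕜}

theorem PosSemidef.sqrt_mul_self (hA : A.PosSemidef) : hA.sqrt * hA.sqrt = A := by
  set U : Matrix n n 𝕜 := hA.1.eigenvectorUnitary.1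
  set D : Matrix n n 𝕜 := diagonal ((↑) ∘ (√·) ∘ hA.1.eigenvalues)
  have hU : star U * U = 1 := Unitary.coe_star_mul_self _
  have hD : D * D = diagonal ((↑) ∘ hA.1.eigenvalues) := by
    rw [diagonal_mul_diagonal]
    congr 1
    ext i
    simp [← RCLike.ofReal_mul, Real.mul_self_sqrt (hA.eigenvalues_nonneg i)]
  calc hA.sqrt * hA.sqrt = U * D * (star U * U) * D * star U := by
        simp only [PosSemidef.sqrt, U, D, Matrix.mul_assoc]
    _ = U * (D * D) * star U := by rw [hU]; simp only [Matrix.mul_one, Matrix.mul_assoc]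
    _ = A := by
      rw [hD]
      conv_rhs => rw [hA.1.spectral_theorem, Unitary.conjStarAlgAut_apply]

theorem PosSemidef.isHermitian_sqrt (hA : A.PosSemidef) : hA.sqrt.IsHermitian := by
  simp only [IsHermitian, PosSemidef.sqrt, conjTranspose_mul, diagonal_conjTranspose,
    Matrix.mul_assoc]
  simp [star_eq_conjTranspose, Pi.star_def, Function.comp_def]

theorem PosDef.isUnit_det_sqrt (hA : A.PosDef) : IsUnit hA.posSemidef.sqrt.det := by
  have hdet : IsUnit (hA.posSemidef.sqrt * hA.posSemidef.sqrt).det := by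
    rw [hA.posSemidef.sqrt_mul_self, ← isUnit_iff_isUnit_det]
    exact hA.isUnit
  rw [det_mul] at hdet
  exact isUnit_of_mul_isUnit_left hdet

end Sqrt

theorem inv_eq_conjTranspose_mul_self_mul {n R : Type*} [Fintype n] [DecidableEq n]
    [CommRing R] [StarRing R] {S T B : Matrix n n R} (hS : S.IsHermitian) (hT : T.IsHermitian)
    (hTT : T * T = B) (hSdet : IsUnit S.det) (hBdet : IsUnit B.det) :
    S⁻¹ = (T * S⁻¹)ᴴ * (T * S⁻¹) * (S * B⁻¹) := by
  rw [conjTranspose_mul, conjTranspose_nonsing_inv, hS.eq, hT.eq]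
  calc S⁻¹ = S⁻¹ * (B * B⁻¹) := by rw [mul_nonsing_inv B hBdet, Matrix.mul_one]
    _ = S⁻¹ * (T * T) * (S⁻¹ * S) * B⁻¹ := by
      rw [nonsing_inv_mul S hSdet, hTT]; simp only [Matrix.mul_one, Matrix.mul_assoc]
    _ = S⁻¹ * T * (T * S⁻¹) * (S * B⁻¹) := by simp only [Matrix.mul_assoc]

end Matrix

theorem euclNorm_nonneg {k : ℕ} (v : Fin k → ℝ) : 0 ≤ euclNorm v := norm_nonneg _

theorem euclNorm_mulVec_le {k l : ℕ} (M : Matrix (Fin k) (Fin l) ℝ) (v : Fin l → ℝ) :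
    euclNorm (M *ᵥ v) ≤ l2OpNorm M * euclNorm v :=
  M.l2_opNorm_mulVec (WithLp.toLp 2 v)

open scoped Matrix.Norms.L2Operator in
theorem euclNorm_conjTranspose_mul_self_mulVec_le {k l : ℕ} (P : Matrix (Fin k) (Fin l) ℝ)
    (v : Fin l → ℝ) : euclNorm ((Pᴴ * P) *ᵥ v) ≤ l2OpNorm P ^ 2 * euclNorm v := by
  have hnorm : l2OpNorm (Pᴴ * P) = l2OpNorm P ^ 2 :=
    (l2_opNorm_conjTranspose_mul_self P).trans (sq _).symm
  exact hnorm ▸ euclNorm_mulVec_le (Pᴴ * P) v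

theorem mul_le_of_le_mul_of_lt_one_div {x y c ρ : ℝ} (hx : 0 ≤ x) (hy : 0 ≤ y)
    (hxy : x ≤ c * y) (hρ : ρ < 1 / c) : ρ * x ≤ y := by
  rcases le_or_gt ρ 0 with hρ0 | hρ0
  · exact (mul_nonpos_of_nonpos_of_nonneg hρ0 hx).trans hy
  have hcpos : 0 < c := one_div_pos.mp (hρ0.trans hρ)
  have hρc : ρ * c ≤ 1 := ((lt_div_iff₀ hcpos).mp hρ).le
  calc ρ * x ≤ ρ * (c * y) := by gcongr
    _ = (ρ * c) * y := by ring
    _ ≤ y := mul_le_of_le_one_left hy hρc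

/-- for `A` symmetric positive semidefinite and `Γ` symmetric positive definite,
`‖Γ^{-1/2} v‖ ≤ ‖(A+Γ)^{1/2} Γ^{-1/2}‖² ‖Γ^{1/2}(A+Γ)^{-1} v‖` for every `v`; in particular,
if `ρ < 1/‖(A+Γ)^{1/2} Γ^{-1/2}‖²` then `ρ‖Γ^{-1/2} v‖ ≤ ‖Γ^{1/2}(A+Γ)^{-1} v‖` for every `v`. -/
theorem discrepancy_lower_bound {n : ℕ}
    (A Γ : Matrix (Fin n) (Fin n) ℝ) (hA : A.PosSemidef) (hΓ : Γ.PosDef) :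
    (∀ v : Fin n → ℝ,
      euclNorm ((hΓ.posSemidef.sqrt)⁻¹ *ᵥ v) ≤
        l2OpNorm ((Matrix.PosDef.posSemidef_add hA hΓ).posSemidef.sqrt *
            (hΓ.posSemidef.sqrt)⁻¹) ^ 2 *
          euclNorm (hΓ.posSemidef.sqrt *ᵥ (A + Γ)⁻¹ *ᵥ v)) ∧
    ∀ ρ : ℝ,
      ρ < 1 / l2OpNorm ((Matrix.PosDef.posSemidef_add hA hΓ).posSemidef.sqrt *
          (hΓ.posSemidef.sqrt)⁻¹) ^ 2 →
      ∀ v : Fin n → ℝ,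
        ρ * euclNorm ((hΓ.posSemidef.sqrt)⁻¹ *ᵥ v) ≤
          euclNorm (hΓ.posSemidef.sqrt *ᵥ (A + Γ)⁻¹ *ᵥ v) := by
  have hB : (A + Γ).PosDef := Matrix.PosDef.posSemidef_add hA hΓ
  set S := hΓ.posSemidef.sqrt
  set P := hB.posSemidef.sqrt * S⁻¹
  have hinv : S⁻¹ = Pᴴ * P * (S * (A + Γ)⁻¹) :=
    inv_eq_conjTranspose_mul_self_mul hΓ.posSemidef.isHermitian_sqrt
      hB.posSemidef.isHermitian_sqrt hB.posSemidef.sqrt_mul_self hΓ.isUnit_det_sqrt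
      ((isUnit_iff_isUnit_det _).mp hB.isUnit)
  have bound (v : Fin n → ℝ) :
      euclNorm (S⁻¹ *ᵥ v) ≤ l2OpNorm P ^ 2 * euclNorm (S *ᵥ (A + Γ)⁻¹ *ᵥ v) := by
    have hv : S⁻¹ *ᵥ v = (Pᴴ * P) *ᵥ (S *ᵥ (A + Γ)⁻¹ *ᵥ v) := by
      rw [hinv, mulVec_mulVec, mulVec_mulVec, ← Matrix.mul_assoc]
    exact hv ▸ euclNorm_conjTranspose_mul_self_mulVec_le P _
  exact ⟨bound, fun ρ hρ v => mul_le_of_le_mul_of_lt_one_div (euclNorm_nonneg _)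
    (euclNorm_nonneg _) (bound v) hρ⟩
end

section
/- Let A be an m×m real symmetric positive semidefinite matrix and Γ an m×m real symmetric positive definite matrix, and let b ∈ ℝᵐ. Then α Γ^{1/2} (A + α Γ)^{-1} b converges to Γ^{-1/2} b as α → ∞. Consequently, for every ρ with 0 < ρ < 1 and every b ≠ 0, there exists N ∈ ℕ such that α = 2^N satisfies ρ‖Γ^{-1/2} b‖ ≤ α‖Γ^{1/2}(A + α Γ)^{-1} b‖. -/
/-!
For `α ≠ 0`, `α (A + αΓ)⁻¹ = (α⁻¹A + Γ)⁻¹`, which tends to `Γ⁻¹` by continuity of matrix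
inversion at the invertible `Γ`; and `Γ^{1/2} Γ⁻¹ = Γ^{-1/2}` because `Γ = Γ^{1/2} Γ^{1/2}`.
For `b ≠ 0` the limit `Γ^{-1/2} b` is nonzero, so along `α = 2^N → ∞` the norms eventually
exceed `ρ` times its norm.
-/

open Matrix Filter

/-- The positive semidefinite square root of a positive semidefinite matrix (the definition of
the former `Matrix.PosSemidef.sqrt`, removed from Mathlib). -/
noncomputable def posSemidefSqrt {n : Type*} [Fintype n] [DecidableEq n]
    {A : Matrix n n ℝ} (hA : A.PosSemidef) : Matrix n n ℝ :=
  (hA.1.eigenvectorUnitary : Matrix n n ℝ) * diagonal ((↑) ∘ Real.sqrt ∘ hA.1.eigenvalues) *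
    (star hA.1.eigenvectorUnitary : Matrix n n ℝ)


open Topology

namespace Matrix

variable {n : Type*} [Fintype n] [DecidableEq n]

theorem inv_smul_eq_inv_smul_inv {K : Type*} [Field K] (k : K) (A : Matrix n n K) :
    (k • A)⁻¹ = k⁻¹ • A⁻¹ := by
  rcases eq_or_ne k 0 with rfl | hk
  · simp
  by_cases hA : IsUnit A.det
  · exact inv_smul' A (Units.mk0 k hk) hA
  · have hkA : ¬IsUnit (k • A).det := by
      rwa [det_smul, IsUnit.mul_iff, not_and_or, or_iff_right (by simp [hk])]
    rw [nonsing_inv_apply_not_isUnit _ hA, nonsing_inv_apply_not_isUnit _ hkA, smul_zero]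

theorem tendsto_smul_inv_add_smul (A : Matrix n n ℝ) {Γ : Matrix n n ℝ} (hΓ : IsUnit Γ.det) :
    Tendsto (fun α : ℝ => α • (A + α • Γ)⁻¹) atTop (𝓝 Γ⁻¹) := by
  have hinv : ContinuousAt Inv.inv Γ :=
    continuousAt_matrix_inv Γ (NormedRing.inverse_continuousAt hΓ.unit)
  have hpert : Tendsto (fun α : ℝ => α⁻¹ • A + Γ) atTop (𝓝 Γ) := by
    simpa using ((tendsto_inv_atTop_zero (𝕜 := ℝ)).smul_const A).add_const Γ
  refine (hinv.tendsto.comp hpert).congr' ?_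
  filter_upwards [eventually_ne_atTop 0] with α hα
  have hfactor : A + α • Γ = α • (α⁻¹ • A + Γ) := by
    rw [smul_add, smul_smul, mul_inv_cancel₀ hα, one_smul]
  rw [Function.comp_apply, hfactor, inv_smul_eq_inv_smul_inv, smul_smul, mul_inv_cancel₀ hα,
    one_smul]

theorem mul_inv_mul_self {R : Type*} [CommRing R] {S : Matrix n n R} (hS : IsUnit S.det) :
    S * (S * S)⁻¹ = S⁻¹ := by
  rw [mul_inv_rev, ← mul_assoc, mul_nonsing_inv _ hS, one_mul]

end Matrix

lemma posSemidefSqrt_mul_self {n : Type*} [Fintype n] [DecidableEq n]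
    {A : Matrix n n ℝ} (hA : A.PosSemidef) : posSemidefSqrt hA * posSemidefSqrt hA = A := by
  have hU : (star hA.1.eigenvectorUnitary : Matrix n n ℝ) * hA.1.eigenvectorUnitary = 1 :=
    Unitary.coe_star_mul_self _
  have hD : diagonal ((fun x : ℝ => x) ∘ Real.sqrt ∘ hA.1.eigenvalues) *
      diagonal ((fun x : ℝ => x) ∘ Real.sqrt ∘ hA.1.eigenvalues) =
      diagonal (RCLike.ofReal ∘ hA.1.eigenvalues) := by
    rw [diagonal_mul_diagonal]
    congr 1
    funext i
    simp [Real.mul_self_sqrt (hA.eigenvalues_nonneg i)]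
  conv_rhs => rw [hA.1.spectral_theorem, Unitary.conjStarAlgAut_apply]
  unfold posSemidefSqrt
  rw [← hD]
  simp only [mul_assoc]
  rw [← mul_assoc _ (hA.1.eigenvectorUnitary : Matrix n n ℝ), hU, one_mul]

lemma isUnit_det_posSemidefSqrt {n : Type*} [Fintype n] [DecidableEq n]
    {A : Matrix n n ℝ} (hA : A.PosDef) : IsUnit (posSemidefSqrt hA.posSemidef).det := by
  have h := (isUnit_iff_isUnit_det A).1 hA.isUnit
  rw [← posSemidefSqrt_mul_self hA.posSemidef, det_mul] at h
  exact isUnit_of_mul_isUnit_left h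

lemma posSemidefSqrt_mul_inv {n : Type*} [Fintype n] [DecidableEq n]
    {A : Matrix n n ℝ} (hA : A.PosDef) :
    posSemidefSqrt hA.posSemidef * A⁻¹ = (posSemidefSqrt hA.posSemidef)⁻¹ := by
  have h := mul_inv_mul_self (isUnit_det_posSemidefSqrt hA)
  rwa [posSemidefSqrt_mul_self] at h

lemma euclNorm_smul {k : ℕ} (c : ℝ) (v : Fin k → ℝ) : euclNorm (c • v) = |c| * euclNorm v := by
  rw [euclNorm, euclNorm, WithLp.equiv_symm_apply, WithLp.toLp_smul, norm_smul, Real.norm_eq_abs]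

lemma continuous_euclNorm {k : ℕ} : Continuous (euclNorm (k := k)) :=
  continuous_norm.comp (PiLp.continuous_toLp _ _)

lemma euclNorm_pos {k : ℕ} {v : Fin k → ℝ} (hv : v ≠ 0) : 0 < euclNorm v :=
  norm_pos_iff.2 (by simpa using hv)

theorem doubling_reaches_discrepancy_general {m : ℕ} (A Γ : Matrix (Fin m) (Fin m) ℝ)
    (hΓ : Γ.PosDef) (b : Fin m → ℝ) :
    Tendsto (fun α : ℝ => α • (posSemidefSqrt hΓ.posSemidef *ᵥ (A + α • Γ)⁻¹ *ᵥ b))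
      atTop (nhds ((posSemidefSqrt hΓ.posSemidef)⁻¹ *ᵥ b)) ∧
    ∀ ρ : ℝ, 0 < ρ → ρ < 1 → b ≠ 0 →
      ∃ N : ℕ,
        ρ * euclNorm ((posSemidefSqrt hΓ.posSemidef)⁻¹ *ᵥ b) ≤
          (2 : ℝ) ^ N *
            euclNorm (posSemidefSqrt hΓ.posSemidef *ᵥ (A + ((2 : ℝ) ^ N) • Γ)⁻¹ *ᵥ b) := by
  set S := posSemidefSqrt hΓ.posSemidef
  have hlim : Tendsto (fun α : ℝ => α • (S *ᵥ (A + α • Γ)⁻¹ *ᵥ b)) atTop (𝓝 (S⁻¹ *ᵥ b)) := by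
    have hcont : Continuous fun X : Matrix (Fin m) (Fin m) ℝ => S *ᵥ X *ᵥ b :=
      continuous_const.matrix_mulVec (continuous_id.matrix_mulVec continuous_const)
    have h := (hcont.tendsto _).comp
      (tendsto_smul_inv_add_smul A ((isUnit_iff_isUnit_det Γ).1 hΓ.isUnit))
    rw [mulVec_mulVec, posSemidefSqrt_mul_inv hΓ] at h
    simpa only [Function.comp_def, smul_mulVec, mulVec_smul] using h
  refine ⟨hlim, fun ρ _ hρ1 hb => ?_⟩
  have hS : IsUnit S⁻¹.det := isUnit_nonsing_inv_det _ (isUnit_det_posSemidefSqrt hΓ)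
  have hw : 0 < euclNorm (S⁻¹ *ᵥ b) :=
    euclNorm_pos fun h => hb (eq_zero_of_mulVec_eq_zero hS.ne_zero h)
  obtain ⟨N, hN⟩ := (((continuous_euclNorm.tendsto _).comp hlim).comp
    (tendsto_pow_atTop_atTop_of_one_lt one_lt_two)).eventually
      (eventually_gt_nhds (mul_lt_of_lt_one_left hw hρ1)) |>.exists
  refine ⟨N, ?_⟩
  simpa [euclNorm_smul] using hN.le

/-- `α Γ^{1/2}(A + αΓ)⁻¹ b → Γ^{-1/2} b` as `α → ∞`; consequently, for every
`ρ ∈ (0,1)` and `b ≠ 0` there is `N ∈ ℕ` such that `α = 2^N` satisfies the discrepancy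
condition `ρ‖Γ^{-1/2} b‖ ≤ α‖Γ^{1/2}(A + αΓ)⁻¹ b‖`. -/
theorem doubling_reaches_discrepancy {m : ℕ} (A Γ : Matrix (Fin m) (Fin m) ℝ)
    (hA : A.PosSemidef) (hΓ : Γ.PosDef) (b : Fin m → ℝ) :
    Tendsto (fun α : ℝ => α • (posSemidefSqrt hΓ.posSemidef *ᵥ (A + α • Γ)⁻¹ *ᵥ b))
      atTop (nhds ((posSemidefSqrt hΓ.posSemidef)⁻¹ *ᵥ b)) ∧
    ∀ ρ : ℝ, 0 < ρ → ρ < 1 → b ≠ 0 →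
      ∃ N : ℕ,
        ρ * euclNorm ((posSemidefSqrt hΓ.posSemidef)⁻¹ *ᵥ b) ≤
          (2 : ℝ) ^ N *
            euclNorm (posSemidefSqrt hΓ.posSemidef *ᵥ (A + ((2 : ℝ) ^ N) • Γ)⁻¹ *ᵥ b) :=
  doubling_reaches_discrepancy_general A Γ hΓ b
end
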